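/- For every real number λ > 0, the improper integral ∫₀^∞ t^(−3/2)·(1 − exp(−t·λ²)) dt converges and equals 2·√π·λ. In particular, λ = c₁·∫₀^∞ t^(−3/2)·(1 − exp(−t·λ²)) dt with the constant c₁ = 1/(2√π). -/

import Mathlib

/-!
Set `g(t) = t^(-s) (1 - e^(-at))` for `0 < s < 1` and `a > 0`. It vanishes at `0` and at `∞`, and
`g' = -s t^(-s-1) (1 - e^(-at)) + a t^(-s) e^(-at)`, so
`s ∫₀^∞ t^(-s-1) (1 - e^(-at)) dt = a ∫₀^∞ t^(-s) e^(-at) dt = a^s Γ(1-s)`.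
The theorem is the case `s = 1/2`, `a = λ²`, where `Γ(1/2) = √π`.
-/

open MeasureTheory Real Set Filter Topology

section
variable {s a t x : ℝ}

lemma one_sub_exp_neg_mem_Icc (hx : 0 ≤ x) : 1 - exp (-x) ∈ Icc 0 x :=
  ⟨sub_nonneg.2 (exp_le_one_iff.2 (neg_nonpos.2 hx)), by linarith [one_sub_le_exp_neg x]⟩

lemma rpow_mul_one_sub_exp_le (ht : 0 ≤ t) (ha : 0 ≤ a) (hs : s ≠ 1) :
    t ^ (-s) * (1 - exp (-(t * a))) ≤ a * t ^ (1 - s) := by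
  have := (one_sub_exp_neg_mem_Icc (mul_nonneg ht ha)).2
  calc t ^ (-s) * (1 - exp (-(t * a))) ≤ t ^ (-s) * (t * a) := by gcongr
    _ = a * t ^ (1 - s) := by
      rw [sub_eq_neg_add, rpow_add_one' ht (by contrapose! hs; linarith)]; ring

lemma integrableOn_rpow_mul_one_sub_exp (hs0 : 0 < s) (hs1 : s < 1) (ha : 0 ≤ a) :
    IntegrableOn (fun t ↦ t ^ (-s - 1) * (1 - exp (-(t * a)))) (Ioi 0) := by
  have hmeas : AEStronglyMeasurable (fun t ↦ t ^ (-s - 1) * (1 - exp (-(t * a))))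
      (volume.restrict (Ioi 0)) :=
    (ContinuousOn.mul (continuousOn_id.rpow_const fun t ht ↦ Or.inl (ne_of_gt ht))
      (by fun_prop)).aestronglyMeasurable measurableSet_Ioi
  rw [← Ioo_union_Ici_eq_Ioi one_pos]
  refine IntegrableOn.union ?_ ?_
  · have hdom : IntegrableOn (fun t ↦ a * t ^ (-s)) (Ioo 0 1) :=
      ((intervalIntegral.integrableOn_Ioo_rpow_iff one_pos).2 (by linarith)).const_mul a
    refine hdom.mono' (hmeas.mono_set Ioo_subset_Ioi_self) ?_
    filter_upwards [ae_restrict_mem measurableSet_Ioo] with t ht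
    have ht0 : 0 < t := ht.1
    have hI := one_sub_exp_neg_mem_Icc (mul_nonneg ht0.le ha)
    rw [norm_of_nonneg (mul_nonneg (by positivity) hI.1)]
    calc t ^ (-s - 1) * (1 - exp (-(t * a))) ≤ t ^ (-s - 1) * (t * a) := by gcongr; exact hI.2
      _ = a * t ^ (-s) := by rw [rpow_sub_one ht0.ne']; field_simp
  · have hdom : IntegrableOn (fun t ↦ t ^ (-s - 1)) (Ici (1 : ℝ)) :=
      (integrableOn_Ici_iff_integrableOn_Ioi).mpr
        (integrableOn_Ioi_rpow_of_lt (by linarith) one_pos)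
    refine hdom.mono' (hmeas.mono_set (Ici_subset_Ioi.2 one_pos)) ?_
    filter_upwards [ae_restrict_mem measurableSet_Ici] with t (ht : 1 ≤ t)
    have hI := one_sub_exp_neg_mem_Icc (mul_nonneg (zero_le_one.trans ht) ha)
    have hpos : 0 ≤ t ^ (-s - 1) := by positivity
    rw [norm_of_nonneg (mul_nonneg hpos hI.1)]
    exact mul_le_of_le_one_right hpos (by linarith [exp_pos (-(t * a))])

lemma hasDerivAt_rpow_mul_one_sub_exp (ht : 0 < t) :
    HasDerivAt (fun t ↦ t ^ (-s) * (1 - exp (-(t * a))))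
      (-s * (t ^ (-s - 1) * (1 - exp (-(t * a)))) + a * (t ^ (-s) * exp (-(a * t)))) t := by
  refine ((hasDerivAt_rpow_const (p := -s) (Or.inl ht.ne')).mul
    (((hasDerivAt_id' t).mul_const a).fun_neg.exp.const_sub 1)).congr_deriv ?_
  rw [mul_comm a t]
  ring

lemma continuousWithinAt_rpow_mul_one_sub_exp (hs : s < 1) (ha : 0 ≤ a) :
    ContinuousWithinAt (fun t ↦ t ^ (-s) * (1 - exp (-(t * a)))) (Ici 0) 0 := by
  have hbound : Tendsto (fun t : ℝ ↦ a * t ^ (1 - s)) (𝓝[≥] 0) (𝓝 0) := by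
    refine tendsto_nhdsWithin_of_tendsto_nhds ?_
    simpa [zero_rpow (sub_ne_zero.2 hs.ne')] using
      (continuousAt_rpow_const 0 (1 - s) (Or.inr (by linarith))).tendsto.const_mul a
  rw [ContinuousWithinAt, zero_mul, neg_zero, exp_zero, sub_self, mul_zero]
  refine squeeze_zero' ?_ ?_ hbound
  · filter_upwards [self_mem_nhdsWithin] with t (ht : 0 ≤ t)
    exact mul_nonneg (by positivity) (one_sub_exp_neg_mem_Icc (mul_nonneg ht ha)).1
  · filter_upwards [self_mem_nhdsWithin] with t (ht : 0 ≤ t)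
    exact rpow_mul_one_sub_exp_le ht ha hs.ne

lemma tendsto_rpow_mul_one_sub_exp_atTop (hs : 0 < s) (ha : 0 ≤ a) :
    Tendsto (fun t ↦ t ^ (-s) * (1 - exp (-(t * a)))) atTop (𝓝 0) := by
  refine squeeze_zero' ?_ ?_ (tendsto_rpow_neg_atTop hs)
  · filter_upwards [eventually_ge_atTop 0] with t ht
    exact mul_nonneg (by positivity) (one_sub_exp_neg_mem_Icc (mul_nonneg ht ha)).1
  · filter_upwards [eventually_ge_atTop 0] with t ht
    exact mul_le_of_le_one_right (by positivity) (by linarith [exp_pos (-(t * a))])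

theorem integral_rpow_mul_one_sub_exp (hs0 : 0 < s) (hs1 : s < 1) (ha : 0 < a) :
    ∫ t in Ioi 0, t ^ (-s - 1) * (1 - exp (-(t * a))) = a ^ s * Gamma (1 - s) / s := by
  have hJint : IntegrableOn (fun t ↦ t ^ (-s) * exp (-(a * t))) (Ioi 0) := by
    simpa using integrableOn_rpow_mul_exp_neg_mul_rpow (p := 1) (by linarith) one_pos ha
  have hJ : ∫ t in Ioi 0, t ^ (-s) * exp (-(a * t)) = (1 / a) ^ (1 - s) * Gamma (1 - s) := by
    simpa using integral_rpow_mul_exp_neg_mul_Ioi (a := 1 - s) (by linarith) ha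
  have hFTC := integral_Ioi_of_hasDerivAt_of_tendsto
    (continuousWithinAt_rpow_mul_one_sub_exp hs1 ha.le)
    (fun t ht ↦ hasDerivAt_rpow_mul_one_sub_exp (s := s) (a := a) ht)
    (((integrableOn_rpow_mul_one_sub_exp hs0 hs1 ha.le).const_mul (-s)).add (hJint.const_mul a))
    (tendsto_rpow_mul_one_sub_exp_atTop hs0 ha.le)
  rw [integral_add ((integrableOn_rpow_mul_one_sub_exp hs0 hs1 ha.le).const_mul (-s))
    (hJint.const_mul a), integral_const_mul, integral_const_mul, hJ] at hFTC
  have hpow : a * (1 / a) ^ (1 - s) = a ^ s := by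
    rw [one_div, inv_rpow ha.le, ← rpow_neg ha.le, neg_sub, rpow_sub_one ha.ne']
    field_simp
  simp only [zero_mul, neg_zero, exp_zero, sub_self, mul_zero] at hFTC
  rw [eq_div_iff hs0.ne', ← hpow]
  linarith
end

/-- Subordination formula: for `λ > 0`,
    `∫₀^∞ t^(-3/2)·(1 - exp(-t·λ²)) dt = 2·√π·λ`, the integral being convergent;
    in particular `λ = (1/(2√π)) · ∫₀^∞ t^(-3/2)·(1 - exp(-t·λ²)) dt`. -/
theorem stmt_2 (lam : ℝ) (hlam : 0 < lam) :
    IntegrableOn (fun t : ℝ => t ^ (-(3:ℝ)/2) * (1 - Real.exp (-(t * lam^2))))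
      (Set.Ioi 0) ∧
    (∫ t in Set.Ioi (0:ℝ), t ^ (-(3:ℝ)/2) * (1 - Real.exp (-(t * lam^2))))
      = 2 * Real.sqrt Real.pi * lam ∧
    lam = (1 / (2 * Real.sqrt Real.pi)) *
      ∫ t in Set.Ioi (0:ℝ), t ^ (-(3:ℝ)/2) * (1 - Real.exp (-(t * lam^2))) := by
  have hexp : -(3:ℝ)/2 = -(1/2) - 1 := by norm_num
  have hs : (0:ℝ) < 1/2 ∧ (1/2 : ℝ) < 1 := by norm_num
  have hval : ∫ t in Ioi (0:ℝ), t ^ (-(3:ℝ)/2) * (1 - exp (-(t * lam^2))) = 2 * √π * lam := by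
    rw [hexp, integral_rpow_mul_one_sub_exp hs.1 hs.2 (by positivity), ← sqrt_eq_rpow,
      sqrt_sq hlam.le, show (1:ℝ) - 1/2 = 1/2 by norm_num, Gamma_one_half_eq]
    ring
  refine ⟨hexp ▸ integrableOn_rpow_mul_one_sub_exp hs.1 hs.2 (sq_nonneg lam), hval, ?_⟩
  rw [hval]
  field_simp
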